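/- Let n ≥ 1, σ an involution of {1,…,n}, and v ∈ ℤⁿ an eigenvector of the permutation operator associated to σ with eigenvalue ±1, so that v_i ≡ v_{σ(i)} (mod 2) for all i. Let ℓ be an integer and B an n×n integer matrix with B_{ij} = B_{σ(i)σ(j)} for all i,j. Suppose B·v = λ·v with λ odd, and suppose that for all i, j with σ(i) = i and σ(j) = j one has B_{ij} ≡ 0 (mod 2). Then v_j ≡ 0 (mod 2) for every j with σ(j) = j. -/

import Mathlib

/-!
Reduce `λ v_j = ∑ᵢ B_{ij} v_i` modulo 2. Since `σ j = j`, the summand at `σ i` is congruent to the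
one at `i`, so the non-fixed points of `σ` cancel in pairs, while at fixed points `B_{ij}` is even.
Hence `λ v_j ≡ 0`, and `λ` is odd.
-/

open Finset

theorem sum_eq_zero_of_involutive_of_charTwo {α R : Type*} [Fintype α] [Semiring R] [CharP R 2]
    {σ : α → α} (hσ : Function.Involutive σ) {f : α → R} (hf : ∀ a, f (σ a) = f a)
    (hfix : ∀ a, σ a = a → f a = 0) : ∑ a, f a = 0 :=
  sum_involution (fun a _ => σ a) (fun a _ => by rw [hf, CharTwo.add_self_eq_zero])
    (fun a _ hne heq => hne (hfix a heq)) (fun a _ => mem_univ _) (fun a _ => hσ a)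

theorem intCast_zmod_two_of_eq_one_or_eq_neg_one {ε : ℤ} (hε : ε = 1 ∨ ε = -1) :
    (ε : ZMod 2) = 1 :=
  ZMod.intCast_eq_one_iff_odd.mpr <| hε.elim (fun h => h ▸ odd_one) (fun h => h ▸ odd_neg_one)

theorem fixed_coordinates_even_general
    (n : ℕ)
    (σ : Equiv.Perm (Fin n)) (hσ : ∀ k, σ (σ k) = k)
    (v : Fin n → ℤ) (ε : ℤ) (hε : ε = 1 ∨ ε = -1)
    (hveig : ∀ i, v i = ε * v (σ i))
    (B : Matrix (Fin n) (Fin n) ℤ)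
    (hB : ∀ i j, B i j = B (σ i) (σ j))
    (lam : ℤ) (hlam : lam % 2 = 1)
    (hBv : ∀ j, lam * v j = ∑ i, B i j * v i)
    (heven : ∀ i j, σ i = i → σ j = j → 2 ∣ B i j) :
    ∀ j, σ j = j → 2 ∣ v j := by
  intro j hj
  have hv : ∀ i, (v (σ i) : ZMod 2) = v i := fun i => by
    rw [hveig (σ i), hσ, Int.cast_mul, intCast_zmod_two_of_eq_one_or_eq_neg_one hε, one_mul]
  have hBσ : ∀ i, B (σ i) j = B i j := fun i => by rw [hB, hσ, hj]
  have hsum : ∑ i, ((B i j * v i : ℤ) : ZMod 2) = 0 :=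
    sum_eq_zero_of_involutive_of_charTwo hσ (fun i => by push_cast; rw [hBσ, hv])
      (fun i hi => by
        rw [Int.cast_mul, (ZMod.intCast_zmod_eq_zero_iff_dvd _ 2).mpr (heven i j hi hj), zero_mul])
  have hlam_v : ((lam * v j : ℤ) : ZMod 2) = 0 := by rw [hBv, Int.cast_sum, hsum]
  rw [Int.cast_mul, ZMod.intCast_eq_one_iff_odd.mpr (Int.odd_iff.mpr hlam), one_mul] at hlam_v
  exact (ZMod.intCast_zmod_eq_zero_iff_dvd _ 2).mp hlam_v

/-- Combinatorial core of the evenness theorem: if v is an eigenvector (eigenvalue ±1)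
of the permutation operator of an involution σ, B satisfies B_{ij} = B_{σ(i)σ(j)} and
B_{ij} is even whenever i, j are both fixed by σ, and Bᵀv = λv with λ odd, then
v_j is even for every fixed point j of σ. -/
theorem fixed_coordinates_even
    (n : ℕ) (hn : 1 ≤ n)
    (σ : Equiv.Perm (Fin n)) (hσ : ∀ k, σ (σ k) = k)
    (v : Fin n → ℤ) (ε : ℤ) (hε : ε = 1 ∨ ε = -1)
    (hveig : ∀ i, v i = ε * v (σ i))
    (B : Matrix (Fin n) (Fin n) ℤ)
    (hB : ∀ i j, B i j = B (σ i) (σ j))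
    (lam : ℤ) (hlam : lam % 2 = 1)
    (hBv : ∀ j, lam * v j = ∑ i, B i j * v i)
    (heven : ∀ i j, σ i = i → σ j = j → 2 ∣ B i j) :
    ∀ j, σ j = j → 2 ∣ v j :=
  fixed_coordinates_even_general n σ hσ v ε hε hveig B hB lam hlam hBv heven
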